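/- Let p, q be natural numbers with p ≥ 1 and q ≥ 1, and for a quaternion Z let j_Z on (Fin p → ℍ) × (Fin q → ℍ) be defined by j_Z(u,v) = (fun i => Z * u i, fun k => v k * Z). Let X and Y be purely imaginary quaternions with X*Y ≠ Y*X. Then there is no quaternion W such that j_X ∘ j_Y - j_Y ∘ j_X = j_W. In particular, in the non-isotypic case the family {j_Z : Z purely imaginary} is not closed under the commutator bracket, so the corresponding generalized Heisenberg group with 3-dimensional center and 𝔳 non-isotypic fails Gordon's criterion for natural reductivity. -/

import Mathlib

open Quaternion

/-! The commutator of `j_X` and `j_Y` multiplies the first block on the left by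
`XY - YX` but the second block on the right by `YX - XY`, because right multiplications compose
in the opposite order. A single `j_W` would need `W = XY - YX = -(XY - YX)`, forcing `XY = YX`. -/

/-- Gordon's map `j_Z` on `(Fin p → ℍ) × (Fin q → ℍ)`. -/
noncomputable def gordonJ (p q : ℕ) (Z : ℍ[ℝ]) :
    (Fin p → ℍ[ℝ]) × (Fin q → ℍ[ℝ]) → (Fin p → ℍ[ℝ]) × (Fin q → ℍ[ℝ]) :=
  fun w => (fun i => Z * w.1 i, fun k => w.2 k * Z)

noncomputable def leftRightMul (p q : ℕ) (A B : ℍ[ℝ]) :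
    (Fin p → ℍ[ℝ]) × (Fin q → ℍ[ℝ]) → (Fin p → ℍ[ℝ]) × (Fin q → ℍ[ℝ]) :=
  fun w => (fun i => A * w.1 i, fun k => w.2 k * B)

theorem gordonJ_eq_leftRightMul (p q : ℕ) (Z : ℍ[ℝ]) : gordonJ p q Z = leftRightMul p q Z Z :=
  rfl

namespace leftRightMul

variable {p q : ℕ}

theorem comp (A B A' B' : ℍ[ℝ]) :
    leftRightMul p q A B ∘ leftRightMul p q A' B' = leftRightMul p q (A * A') (B' * B) := by
  ext w <;> simp [leftRightMul, mul_assoc]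

theorem sub (A B A' B' : ℍ[ℝ]) :
    leftRightMul p q A B - leftRightMul p q A' B' = leftRightMul p q (A - A') (B - B') := by
  ext w <;> simp [leftRightMul, sub_mul, mul_sub]

theorem inj (hp : 1 ≤ p) (hq : 1 ≤ q) {A B A' B' : ℍ[ℝ]} :
    leftRightMul p q A B = leftRightMul p q A' B' ↔ A = A' ∧ B = B' := by
  refine ⟨fun h => ?_, fun ⟨hA, hB⟩ => hA ▸ hB ▸ rfl⟩
  have h1 := congrFun h (fun _ => 1, fun _ => 1)
  simp only [leftRightMul, Prod.mk.injEq, mul_one, one_mul, funext_iff] at h1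
  exact ⟨h1.1 ⟨0, hp⟩, h1.2 ⟨0, hq⟩⟩

end leftRightMul

theorem gordonJ_commutator (p q : ℕ) (X Y : ℍ[ℝ]) :
    gordonJ p q X ∘ gordonJ p q Y - gordonJ p q Y ∘ gordonJ p q X
      = leftRightMul p q (X * Y - Y * X) (-(X * Y - Y * X)) := by
  simp only [gordonJ_eq_leftRightMul, leftRightMul.comp, leftRightMul.sub, neg_sub]

theorem gordonJ_commutator_not_in_family_general (p q : ℕ) (hp : 1 ≤ p) (hq : 1 ≤ q)
    (X Y : ℍ[ℝ]) (hXY : X * Y ≠ Y * X) :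
    ¬ ∃ W : ℍ[ℝ],
      (gordonJ p q X ∘ gordonJ p q Y) - (gordonJ p q Y ∘ gordonJ p q X)
        = gordonJ p q W := by
  rintro ⟨W, hW⟩
  rw [gordonJ_commutator, gordonJ_eq_leftRightMul] at hW
  obtain ⟨hW_left, hW_right⟩ := (leftRightMul.inj hp hq).mp hW
  have : IsAddTorsionFree ℍ[ℝ] := .of_module_rat _
  have hcomm : X * Y - Y * X = 0 := self_eq_neg.mp (hW_left.trans hW_right.symm)
  exact hXY (sub_eq_zero.mp hcomm)

/-- In the non-isotypic case (`p ≥ 1` and `q ≥ 1`), for purely imaginary `X`, `Y`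
with `X*Y ≠ Y*X`, the commutator `[j_X, j_Y]` is not of the form `j_W` for any
quaternion `W`: the family `{j_Z}` is not closed under the bracket, so the
corresponding generalized Heisenberg group fails Gordon's criterion for
natural reductivity. -/
theorem gordonJ_commutator_not_in_family (p q : ℕ) (hp : 1 ≤ p) (hq : 1 ≤ q)
    (X Y : ℍ[ℝ]) (hX : X.re = 0) (hY : Y.re = 0) (hXY : X * Y ≠ Y * X) :
    ¬ ∃ W : ℍ[ℝ],
      (gordonJ p q X ∘ gordonJ p q Y) - (gordonJ p q Y ∘ gordonJ p q X)
        = gordonJ p q W :=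
  gordonJ_commutator_not_in_family_general p q hp hq X Y hXY
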